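/- Every structural causal model with unique solutions satisfies reversibility: for any exogenous setting u, intervention w on a set W, and distinct variables Y, Z ∉ W, if Y_{w,z}(u) = y and Z_{w,y}(u) = z then Y_w(u) = y. -/
import Mathlib


open scoped Classical

/-- An intervention: a partial assignment of values to variables. -/
def Itv (V : Type*) (Val : V → Type*) := ∀ v, Option (Val v)

/-- A potential outcome `Y_x`: an outcome variable together with an intervention. -/
structure PO (V : Type*) (Val : V → Type*) where
  Y : V
  x : Itv V Val

/-- A Rubin causal model (with a probability distribution on its units). -/
structure RCM (U : Type*) (V : Type*) (Val : V → Type*) where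
  O : Set (PO V Val)
  F : (o : PO V Val) → U → Val o.Y
  P : U → ℝ
  P_nonneg : ∀ u, 0 ≤ P u
  P_sum : ∑ᶠ u, P u = 1

/-- Joint valuations ("counterfactuals") of a set of potential outcomes. -/
def CFVal {V : Type*} {Val : V → Type*} (O : Set (PO V Val)) :=
  (o : O) → Val o.1.Y

/-- The (pushforward) counterfactual distribution of an RCM, computed on a set
of potential outcomes. -/
noncomputable def RCM.cfOn {U V : Type*} {Val : V → Type*} (R : RCM U V Val)
    (O : Set (PO V Val)) (g : CFVal O) : ℝ :=
  ∑ᶠ u, if ∀ o : O, R.F o.1 u = g o then R.P u else 0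

/-- The counterfactual distribution of an RCM on its own defined outcomes. -/
noncomputable def RCM.cf {U V : Type*} {Val : V → Type*} (R : RCM U V Val)
    (g : CFVal R.O) : ℝ := R.cfOn R.O g

/-- Effectiveness: intervened variables take their intervened values. -/
def RCM.Effective {U V : Type*} {Val : V → Type*} (R : RCM U V Val) : Prop :=
  ∀ o, o ∈ R.O → ∀ u, ∀ y : Val o.Y, o.x o.Y = some y → R.F o u = y

/-- Update an intervention at one variable. -/
noncomputable def upd {V : Type*} {Val : V → Type*} (x : Itv V Val) (Y : V) (y : Val Y) :
    Itv V Val :=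
  fun v => if h : v = Y then some (cast (congrArg Val h.symm) y) else x v

/-- Composition, at every unit, whenever the relevant outcomes are defined. -/
def RCM.Composition {U V : Type*} {Val : V → Type*} (R : RCM U V Val) : Prop :=
  ∀ (u : U) (Y Z : V) (w : Itv V Val),
    (⟨Y, w⟩ : PO V Val) ∈ R.O → (⟨Z, w⟩ : PO V Val) ∈ R.O →
    (⟨Z, upd w Y (R.F ⟨Y, w⟩ u)⟩ : PO V Val) ∈ R.O →
    R.F ⟨Z, upd w Y (R.F ⟨Y, w⟩ u)⟩ u = R.F ⟨Z, w⟩ u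

/-- Reversibility, at every unit, whenever the relevant outcomes are defined. -/
def RCM.Reversibility {U V : Type*} {Val : V → Type*} (R : RCM U V Val) : Prop :=
  ∀ (u : U) (Y Z : V) (w : Itv V Val) (y : Val Y) (z : Val Z), Y ≠ Z →
    (⟨Y, upd w Z z⟩ : PO V Val) ∈ R.O → (⟨Z, upd w Y y⟩ : PO V Val) ∈ R.O →
    (⟨Y, w⟩ : PO V Val) ∈ R.O →
    R.F ⟨Y, upd w Z z⟩ u = y → R.F ⟨Z, upd w Y y⟩ u = z →
    R.F ⟨Y, w⟩ u = y

/-- A structural causal model. -/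
structure SCM (Uex : Type*) (V : Type*) (Val : V → Type*) where
  Pa : V → Set V
  Pa_irr : ∀ v, v ∉ Pa v
  f : (v : V) → ((w : V) → Val w) → Uex → Val v
  f_dep : ∀ v a b u, (∀ w ∈ Pa v, a w = b w) → f v a u = f v b u
  P : Uex → ℝ
  P_nonneg : ∀ u, 0 ≤ P u
  P_sum : ∑ᶠ u, P u = 1

/-- `s` solves the manipulated model `M_x` under exogenous setting `u`. -/
def SCM.IsSol {Uex V : Type*} {Val : V → Type*} (M : SCM Uex V Val)
    (x : Itv V Val) (u : Uex) (s : ∀ w, Val w) : Prop :=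
  ∀ w, s w = (x w).getD (M.f w s u)

/-- `M` has a unique solution under every intervention and exogenous setting. -/
def SCM.Uniq {Uex V : Type*} {Val : V → Type*} (M : SCM Uex V Val) : Prop :=
  ∀ (x : Itv V Val) (u : Uex), ∃! s, M.IsSol x u s

/-- The potential outcome `Y_x(u)` of an SCM with unique solutions. -/
noncomputable def SCM.po {Uex V : Type*} {Val : V → Type*} (M : SCM Uex V Val)
    (h : M.Uniq) (o : PO V Val) (u : Uex) : Val o.Y :=
  (h o.x u).exists.choose o.Y

/-- The counterfactual distribution of an SCM on a set of potential outcomes. -/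
noncomputable def SCM.cf {Uex V : Type*} {Val : V → Type*} (M : SCM Uex V Val)
    (h : M.Uniq) (O : Set (PO V Val)) (g : CFVal O) : ℝ :=
  ∑ᶠ u, if ∀ o : O, M.po h o.1 u = g o then M.P u else 0

/-- `M` represents `R`: the counterfactual distribution of `M` marginalizes to
that of `R` on the outcomes defined by `R`. -/
def Represents {Uex U V : Type*} {Val : V → Type*} (M : SCM Uex V Val) (h : M.Uniq)
    (R : RCM U V Val) : Prop :=
  ∀ g : CFVal R.O, M.cf h R.O g = R.cf g

/-- `R` is representable by some SCM with unique solutions. -/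
def RCM.Representable {U V : Type*} {Val : V → Type*} (R : RCM U V Val) : Prop :=
  ∃ (Uex : Type) (M : SCM Uex V Val) (h : M.Uniq), Finite Uex ∧ Represents M h R

/-- `R'` extends `R`. -/
def RCM.Extends {U V : Type*} {Val : V → Type*} (R' R : RCM U V Val) : Prop :=
  R.O ⊆ R'.O ∧ (∀ o ∈ R.O, R'.F o = R.F o) ∧ R'.P = R.P

/-- A full RCM defines every potential outcome. -/
def RCM.Full {U V : Type*} {Val : V → Type*} (R : RCM U V Val) : Prop :=
  R.O = Set.univ

/-- `R'` is a submodel of `R`. -/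
def Submodel {U V : Type*} {Val : V → Type*} (R' R : RCM U V Val) : Prop :=
  R'.O ⊆ R.O ∧ (∀ o ∈ R'.O, R'.F o = R.F o) ∧ R'.P = R.P

/-- Every SCM with unique solutions satisfies reversibility. -/
theorem stmt5 {Uex V : Type} {Val : V → Type} (M : SCM Uex V Val) (h : M.Uniq)
    (u : Uex) (w : Itv V Val) (Y Z : V) (hYZ : Y ≠ Z)
    (hYW : w Y = none) (hZW : w Z = none)
    (y : Val Y) (z : Val Z)
    (hy : M.po h ⟨Y, upd w Z z⟩ u = y) (hz : M.po h ⟨Z, upd w Y y⟩ u = z) :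
    M.po h ⟨Y, w⟩ u = y := by
  have hs₁ : M.IsSol (upd w Z z) u ((h (upd w Z z) u).exists.choose) :=
    (h (upd w Z z) u).exists.choose_spec
  have hs₂ : M.IsSol (upd w Y y) u ((h (upd w Y y) u).exists.choose) :=
    (h (upd w Y y) u).exists.choose_spec
  have hs : M.IsSol w u ((h w u).exists.choose) := (h w u).exists.choose_spec
  set s₁ := (h (upd w Z z) u).exists.choose with hs₁def
  set s₂ := (h (upd w Y y) u).exists.choose with hs₂def
  set s := (h w u).exists.choose with hsdef
  have hy' : s₁ Y = y := hy
  have hz' : s₂ Z = z := hz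
  have huZ : upd w Z z Z = some z := by simp [upd]
  have huY : upd w Y y Y = some y := by simp [upd]
  have huZY : upd w Z z Y = w Y := by simp [upd, hYZ]
  have huYZ : upd w Y y Z = w Z := by simp [upd, hYZ.symm]
  have hs₂Y : s₂ Y = y := by
    have := hs₂ Y
    rw [huY] at this
    exact this
  have hs₁Z : s₁ Z = z := by
    have := hs₁ Z
    rw [huZ] at this
    exact this
  -- both s₁ and s₂ solve the intervention fixing both Y and Z
  have h₁ : M.IsSol (upd (upd w Z z) Y y) u s₁ := by
    intro v
    by_cases hv : v = Y
    · subst hv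
      simp [upd, hy']
    · have : upd (upd w Z z) Y y v = upd w Z z v := by simp [upd, hv]
      rw [this]; exact hs₁ v
  have h₂ : M.IsSol (upd (upd w Z z) Y y) u s₂ := by
    intro v
    by_cases hv : v = Y
    · subst hv
      simp [upd, hs₂Y]
    · by_cases hvz : v = Z
      · subst hvz
        have heq : upd (upd w v z) Y y v = some z := by simp [upd, hv]
        rw [heq]; exact hz'
      · have h1 : upd (upd w Z z) Y y v = w v := by simp [upd, hv, hvz]
        have h2 : upd w Y y v = w v := by simp [upd, hv]
        rw [h1, ← h2]; exact hs₂ v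
  have h12 : s₁ = s₂ := (h (upd (upd w Z z) Y y) u).unique h₁ h₂
  -- s₁ solves the original intervention w
  have h₁w : M.IsSol w u s₁ := by
    intro v
    by_cases hv : v = Y
    · subst hv
      have := hs₁ v
      rw [huZY, hYW] at this
      rw [hYW]; exact this
    · by_cases hvz : v = Z
      · subst hvz
        have := hs₂ v
        rw [huYZ, hZW] at this
        rw [hZW, h12]; exact this
      · have heq : upd w Z z v = w v := by simp [upd, hvz]
        have := hs₁ v
        rw [heq] at this
        exact this
  have : s = s₁ := (h w u).unique hs h₁w
  show s Y = y
  rw [this, hy']
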